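/- Let Λ be a finite-dimensional k-algebra and suppose {I_i}_{i ∈ ℕ} is an infinite family of pairwise distinct two-sided ideals of Λ such that all quotient algebras Λ/I_i are isomorphic as k-algebras. If Λ/I_1 has a faithful brick of k-dimension d, then Λ admits infinitely many pairwise non-isomorphic bricks of k-dimension d. -/

import Mathlib

/-!
Fix `k`-algebra isomorphisms `eᵢ : Λ/Iᵢ ≃ Λ/I₁` and restrict the faithful brick `B` of `Λ/I₁`
along the surjections `φᵢ : Λ → Λ/Iᵢ → Λ/I₁`. Restriction along a surjective ring map keeps
endomorphisms, hence bricks, and it keeps the `k`-dimension because `φᵢ` is `k`-linear. Since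
`B` is faithful, the annihilator of the `i`-th restriction is `ker φᵢ = Iᵢ`; isomorphic modules have
equal annihilators, so the restrictions are pairwise non-isomorphic.
-/

open CategoryTheory

/-- A module is a *brick* if its endomorphism ring is a division ring. -/
def IsBrick (R : Type*) (M : Type*) [Ring R] [AddCommGroup M] [Module R M] : Prop :=
  Nontrivial M ∧ ∀ f : Module.End R M, f ≠ 0 → IsUnit f

section

variable (k : Type) [Field k] (Λ : Type) [Ring Λ] [Algebra k Λ]

/-- The `k`-algebra structure on the quotient of `Λ` by a ring congruence. -/
noncomputable instance quotAlgebra (c : RingCon Λ) : Algebra k c.Quotient :=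
  RingHom.toAlgebra' (c.mk'.comp (algebraMap k Λ)) (by
    intro a x
    obtain ⟨y, rfl⟩ : ∃ y, c.mk' y = x := Quotient.mk''_surjective x
    show c.mk' _ * c.mk' y = c.mk' y * c.mk' _
    rw [← map_mul, ← map_mul, Algebra.commutes])

/-- The `k`-dimension of a `Λ`-module, computed via restriction of scalars along
`algebraMap k Λ`. -/
noncomputable def kdim (M : ModuleCat.{0} Λ) : ℕ :=
  letI : Module k M := Module.compHom M (algebraMap k Λ)
  Module.finrank k M

-- Mathlib's `RingCon.mkₐ` is stated for its own `Algebra k c.Quotient` instance, which is not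
-- definitionally equal to `quotAlgebra`.
def quotAlgebraMkₐ (c : RingCon Λ) : Λ →ₐ[k] c.Quotient :=
  { c.mk' with commutes' := fun _ => rfl }

-- `IsScalarTower k c.Quotient M` refers to Mathlib's `RingCon` scalar action of `k` on
-- `c.Quotient`, not to the one coming from `quotAlgebra`.
theorem quotAlgebra_algebraMap_smul (c : RingCon Λ) {M : Type*} [AddCommGroup M]
    [Module c.Quotient M] [Module k M] [IsScalarTower k c.Quotient M] (a : k) (m : M) :
    algebraMap k c.Quotient a • m = a • m := by
  change c.mk' (algebraMap k Λ a) • m = a • m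
  rw [Algebra.algebraMap_eq_smul_one]
  exact smul_one_smul c.Quotient a m

theorem kdim_restrictScalars {Q : Type} [Ring Q] [Algebra k Q] (f : Λ →ₐ[k] Q) (M : Type)
    [AddCommGroup M] [Module Q M] [Module k M]
    (hM : ∀ (a : k) (m : M), algebraMap k Q a • m = a • m) :
    kdim k Λ ((ModuleCat.restrictScalars f.toRingHom).obj (ModuleCat.of Q M)) =
      Module.finrank k M := by
  have hmod : (Module.compHom M ((f : Λ →+* Q).comp (algebraMap k Λ)) : Module k M) = ‹_› :=
    Module.ext' _ _ fun a m => by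
      change f (algebraMap k Λ a) • m = a • m
      rw [f.commutes, hM]
  exact congrArg (@Module.finrank k M _ _) hmod

section
variable {R S : Type*} [Ring R] [Ring S] {φ : R →+* S}

noncomputable def Module.End.ofRestrictScalars (hφ : Function.Surjective φ) {M : ModuleCat S}
    (f : Module.End R ((ModuleCat.restrictScalars φ).obj M)) : Module.End S M where
  toFun := f
  map_add' := f.map_add
  map_smul' s m := by
    obtain ⟨r, rfl⟩ := hφ s
    exact f.map_smul r m

theorem IsBrick.restrictScalars (hφ : Function.Surjective φ) {M : ModuleCat S}
    (hM : IsBrick S M) : IsBrick R ((ModuleCat.restrictScalars φ).obj M) := by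
  refine ⟨hM.1, fun f hf => ?_⟩
  have hf' : Module.End.ofRestrictScalars hφ f ≠ 0 := fun h =>
    hf (LinearMap.ext fun m => LinearMap.congr_fun h m)
  have hunit := hM.2 _ hf'
  rw [Module.End.isUnit_iff] at hunit ⊢
  exact hunit

theorem ModuleCat.annihilator_restrictScalars (M : ModuleCat S) :
    Module.annihilator R ((ModuleCat.restrictScalars φ).obj M) =
      (Module.annihilator S M).comap φ := by
  ext r
  rw [Ideal.mem_comap, Module.mem_annihilator, Module.mem_annihilator]
  rfl

theorem ModuleCat.annihilator_restrictScalars_of_faithfulSMul (M : ModuleCat S)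
    [FaithfulSMul S M] :
    Module.annihilator R ((ModuleCat.restrictScalars φ).obj M) = RingHom.ker φ := by
  rw [annihilator_restrictScalars, Module.annihilator_eq_bot.mpr ‹_›, RingHom.ker_eq_comap_bot]

theorem TwoSidedIdeal.ker_comp_ringCon_mk' (I : TwoSidedIdeal R) {f : I.ringCon.Quotient →+* S}
    (hf : Function.Injective f) : RingHom.ker (f.comp I.ringCon.mk') = I.asIdeal := by
  ext x
  rw [RingHom.ker_comp_of_injective _ hf, RingHom.mem_ker, mem_asIdeal, ← mem_ker,
    ker_ringCon_mk']

end

theorem stmt_3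
    (I : ℕ → TwoSidedIdeal Λ) (hinj : Function.Injective I)
    (hiso : ∀ i, Nonempty ((I i).ringCon.Quotient ≃ₐ[k] (I 1).ringCon.Quotient))
    (d : ℕ)
    (hbrick : ∃ (B : Type) (_ : AddCommGroup B) (_ : Module (I 1).ringCon.Quotient B)
      (_ : Module k B) (_ : IsScalarTower k (I 1).ringCon.Quotient B),
      IsBrick (I 1).ringCon.Quotient B ∧ FaithfulSMul (I 1).ringCon.Quotient B ∧
        Module.finrank k B = d) :
    ∃ B : ℕ → ModuleCat.{0} Λ,
      (∀ i, IsBrick Λ (B i) ∧ kdim k Λ (B i) = d) ∧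
      ∀ i j, i ≠ j → IsEmpty (B i ≅ B j) := by
  obtain ⟨B, _, _, _, _, hB, _, rfl⟩ := hbrick
  let e i := (hiso i).some
  let φ i : Λ →ₐ[k] (I 1).ringCon.Quotient :=
    (e i).toAlgHom.comp (quotAlgebraMkₐ k Λ (I i).ringCon)
  have hφ i : Function.Surjective (φ i) :=
    (e i).surjective.comp (I i).ringCon.mk'_surjective
  have hker i : RingHom.ker (φ i).toRingHom = (I i).asIdeal :=
    (I i).ker_comp_ringCon_mk' (e i).injective
  refine ⟨fun i => (ModuleCat.restrictScalars (φ i).toRingHom).obj (ModuleCat.of _ B),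
    fun i => ⟨IsBrick.restrictScalars (hφ i) hB, kdim_restrictScalars k Λ (φ i) B
      (quotAlgebra_algebraMap_smul k Λ _)⟩,
    fun i j hij => ⟨fun iso => hij (hinj ?_)⟩⟩
  have hann := iso.toLinearEquiv.annihilator_eq
  rw [ModuleCat.annihilator_restrictScalars_of_faithfulSMul,
    ModuleCat.annihilator_restrictScalars_of_faithfulSMul, hker, hker] at hann
  exact TwoSidedIdeal.ext fun x => by
    rw [← TwoSidedIdeal.mem_asIdeal, hann, TwoSidedIdeal.mem_asIdeal]

end
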